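/- Let k ∈ ℕ, and let a_1, …, a_k, b_1, …, b_k be distinct positive real numbers with a_0, b_0 > 0. Define a(x) = a_0 ∏_{j=1}^{k}(x + a_j), b(x) = b_0 ∏_{j=1}^{k}(x + b_j), and p(x,y) = b(x) + a(x)·y. If b_1 ≤ a_1 ≤ b_2 ≤ a_2 ≤ … ≤ b_k ≤ a_k, then the net (m,n) ↦ 1/p(m,n), (m,n) ∈ ℤ₊², is joint completely monotone. -/

import Mathlib

open MeasureTheory Filter

/-- First partial forward difference. -/
def Delta1 (x : ℕ → ℕ → ℝ) : ℕ → ℕ → ℝ := fun m n => x (m + 1) n - x m n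

/-- Second partial forward difference. -/
def Delta2 (x : ℕ → ℕ → ℝ) : ℕ → ℕ → ℝ := fun m n => x m (n + 1) - x m n

/-- A net indexed by ℤ₊² is joint completely monotone. -/
def JointCM (x : ℕ → ℕ → ℝ) : Prop :=
  ∀ i j m n : ℕ, 0 ≤ (-1 : ℝ) ^ (i + j) * (Delta1^[i] (Delta2^[j] x)) m n

/-- Forward difference of a sequence. -/
def DeltaSeq (x : ℕ → ℝ) : ℕ → ℝ := fun m => x (m + 1) - x m

/-- A sequence is completely monotone. -/
def CM (x : ℕ → ℝ) : Prop :=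
  ∀ k m : ℕ, 0 ≤ (-1 : ℝ) ^ k * (DeltaSeq^[k] x) m

/-- A sequence is a Hausdorff moment sequence. -/
def IsHausdorffMoment (β : ℕ → ℝ) : Prop :=
  ∃ μ : Measure ℝ, IsFiniteMeasure μ ∧ μ (Set.Icc (0 : ℝ) 1)ᶜ = 0 ∧
    ∀ m : ℕ, β m = ∫ s in Set.Icc (0 : ℝ) 1, s ^ m ∂μ

namespace CMHelp


lemma iter_add : ∀ (kk : ℕ) (f g : ℕ → ℝ) (m : ℕ),
    DeltaSeq^[kk] (fun m => f m + g m) m = DeltaSeq^[kk] f m + DeltaSeq^[kk] g m := by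
  intro kk
  induction kk with
  | zero => intro f g m; rfl
  | succ k ih =>
    intro f g m
    rw [Function.iterate_succ_apply, Function.iterate_succ_apply, Function.iterate_succ_apply]
    have : DeltaSeq (fun m => f m + g m) = fun m => DeltaSeq f m + DeltaSeq g m := by
      funext m; simp [DeltaSeq]; ring
    rw [this, ih]

lemma iter_smul (c : ℝ) : ∀ (kk : ℕ) (f : ℕ → ℝ) (m : ℕ),
    DeltaSeq^[kk] (fun m => c * f m) m = c * DeltaSeq^[kk] f m := by
  intro kk
  induction kk with
  | zero => intro f m; rfl
  | succ k ih =>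
    intro f m
    rw [Function.iterate_succ_apply, Function.iterate_succ_apply]
    have : DeltaSeq (fun m => c * f m) = fun m => c * DeltaSeq f m := by
      funext m; simp [DeltaSeq]; ring
    rw [this, ih]

lemma iter_shift : ∀ (kk : ℕ) (f : ℕ → ℝ) (m : ℕ),
    DeltaSeq^[kk] (fun m => f (m + 1)) m = DeltaSeq^[kk] f (m + 1) := by
  intro kk
  induction kk with
  | zero => intro f m; rfl
  | succ k ih =>
    intro f m
    rw [Function.iterate_succ_apply, Function.iterate_succ_apply]
    have : DeltaSeq (fun m => f (m + 1)) = fun m => DeltaSeq f (m + 1) := rfl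
    rw [this, ih]

lemma cm_nonneg {f : ℕ → ℝ} (hf : CM f) (m : ℕ) : 0 ≤ f m := by
  have := hf 0 m; simpa using this

lemma cm_shift {f : ℕ → ℝ} (hf : CM f) : CM (fun m => f (m + 1)) := by
  intro kk m; rw [iter_shift]; exact hf kk (m + 1)

lemma cm_negDelta {f : ℕ → ℝ} (hf : CM f) : CM (fun m => -(DeltaSeq f m)) := by
  intro kk m
  have h1 : DeltaSeq^[kk] (fun m => -(DeltaSeq f m)) m
      = -(DeltaSeq^[kk+1] f m) := by
    have : (fun m => -(DeltaSeq f m)) = fun m => (-1 : ℝ) * DeltaSeq f m := by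
      funext m; ring
    rw [this, iter_smul, Function.iterate_succ_apply]; ring
  rw [h1]
  have := hf (kk + 1) m
  have e : (-1 : ℝ) ^ kk * -(DeltaSeq^[kk+1] f m) = (-1 : ℝ) ^ (kk+1) * DeltaSeq^[kk+1] f m := by
    rw [pow_succ]; ring
  rw [e]; exact this

lemma cm_zero : CM (fun _ => (0 : ℝ)) := by
  intro kk m
  have : DeltaSeq^[kk] (fun _ => (0:ℝ)) m = 0 := by
    have h : (fun _ : ℕ => (0:ℝ)) = fun m => (0:ℝ) * (fun _ : ℕ => (0:ℝ)) m := by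
      funext m; ring
    rw [h, iter_smul]; ring
  rw [this]; simp

lemma cm_const {c : ℝ} (hc : 0 ≤ c) : CM (fun _ => c) := by
  intro kk m
  cases kk with
  | zero => simpa using hc
  | succ k =>
    rw [Function.iterate_succ_apply]
    have : DeltaSeq (fun _ : ℕ => c) = fun _ => (0:ℝ) := by
      funext m; simp [DeltaSeq]
    rw [this]
    have : DeltaSeq^[k] (fun _ : ℕ => (0:ℝ)) m = 0 := by
      have h : (fun _ : ℕ => (0:ℝ)) = fun m => (0:ℝ) * (fun _ : ℕ => (0:ℝ)) m := by
        funext m; ring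
      rw [h, iter_smul]; ring
    rw [this]; simp

lemma cm_add {f g : ℕ → ℝ} (hf : CM f) (hg : CM g) : CM (fun m => f m + g m) := by
  intro kk m
  rw [iter_add, mul_add]
  exact add_nonneg (hf kk m) (hg kk m)

lemma cm_smul {c : ℝ} (hc : 0 ≤ c) {f : ℕ → ℝ} (hf : CM f) : CM (fun m => c * f m) := by
  intro kk m
  rw [iter_smul]
  have := hf kk m
  calc (0:ℝ) ≤ c * ((-1)^kk * DeltaSeq^[kk] f m) := mul_nonneg hc this
    _ = (-1)^kk * (c * DeltaSeq^[kk] f m) := by ring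

lemma cm_mul_aux : ∀ (kk : ℕ) (f g : ℕ → ℝ), CM f → CM g → ∀ m : ℕ,
    0 ≤ (-1 : ℝ) ^ kk * DeltaSeq^[kk] (fun m => f m * g m) m := by
  intro kk
  induction kk with
  | zero =>
    intro f g hf hg m
    simpa using mul_nonneg (cm_nonneg hf m) (cm_nonneg hg m)
  | succ k ih =>
    intro f g hf hg m
    rw [Function.iterate_succ_apply]
    have hd : DeltaSeq (fun m => f m * g m)
        = fun m => (-1 : ℝ) * ((fun m => f (m+1) * -(DeltaSeq g m)) m
            + (fun m => -(DeltaSeq f m) * g m) m) := by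
      funext m; simp [DeltaSeq]; ring
    rw [hd, iter_smul, iter_add]
    have h1 := ih (fun m => f (m+1)) (fun m => -(DeltaSeq g m)) (cm_shift hf) (cm_negDelta hg) m
    have h2 := ih (fun m => -(DeltaSeq f m)) g (cm_negDelta hf) hg m
    have e : (-1:ℝ)^(k+1) * ((-1) * (DeltaSeq^[k] (fun m => f (m+1) * -(DeltaSeq g m)) m
        + DeltaSeq^[k] (fun m => -(DeltaSeq f m) * g m) m))
        = ((-1:ℝ)^k * DeltaSeq^[k] (fun m => f (m+1) * -(DeltaSeq g m)) m)
          + ((-1:ℝ)^k * DeltaSeq^[k] (fun m => -(DeltaSeq f m) * g m) m) := by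
      rw [pow_succ]; ring
    rw [e]
    exact add_nonneg h1 h2



lemma cm_mul {f g : ℕ → ℝ} (hf : CM f) (hg : CM g) : CM (fun m => f m * g m) :=
  fun kk m => cm_mul_aux kk f g hf hg m

lemma cm_prod {ι : Type*} (s : Finset ι) (f : ι → ℕ → ℝ) (h : ∀ i ∈ s, CM (f i)) :
    CM (fun m => ∏ i ∈ s, f i m) := by
  classical
  induction s using Finset.cons_induction with
  | empty => simpa using cm_const (le_of_lt one_pos)
  | cons a s ha ih =>
    have : (fun m => ∏ i ∈ Finset.cons a s ha, f i m)
        = fun m => f a m * ∏ i ∈ s, f i m := by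
      funext m; rw [Finset.prod_cons]
    rw [this]
    exact cm_mul (h a (Finset.mem_cons_self a s))
      (ih fun i hi => h i (Finset.mem_cons_of_mem hi))

lemma cm_sum {ι : Type*} (s : Finset ι) (f : ι → ℕ → ℝ) (h : ∀ i ∈ s, CM (f i)) :
    CM (fun m => ∑ i ∈ s, f i m) := by
  classical
  induction s using Finset.cons_induction with
  | empty => simpa using cm_const (le_refl (0:ℝ))
  | cons a s ha ih =>
    have : (fun m => ∑ i ∈ Finset.cons a s ha, f i m)
        = fun m => f a m + ∑ i ∈ s, f i m := by
      funext m; rw [Finset.sum_cons]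
    rw [this]
    exact cm_add (h a (Finset.mem_cons_self a s))
      (ih fun i hi => h i (Finset.mem_cons_of_mem hi))

lemma cm_pow {f : ℕ → ℝ} (hf : CM f) (t : ℕ) : CM (fun m => f m ^ t) := by
  induction t with
  | zero => simpa using cm_const (le_of_lt one_pos)
  | succ t ih =>
    have : (fun m => f m ^ (t+1)) = fun m => f m ^ t * f m := by
      funext m; rw [pow_succ]
    rw [this]; exact cm_mul ih hf

lemma tendsto_iter {F : ℕ → ℕ → ℝ} {f : ℕ → ℝ}
    (h : ∀ m, Tendsto (fun N => F N m) atTop (nhds (f m))) :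
    ∀ (kk m : ℕ), Tendsto (fun N => DeltaSeq^[kk] (F N) m) atTop (nhds (DeltaSeq^[kk] f m)) := by
  intro kk
  induction kk with
  | zero => simpa using h
  | succ k ih =>
    intro m
    have := (ih (m+1)).sub (ih m)
    simpa [Function.iterate_succ_apply', DeltaSeq] using this

lemma cm_of_tendsto {F : ℕ → ℕ → ℝ} {f : ℕ → ℝ} (hF : ∀ N, CM (F N))
    (h : ∀ m, Tendsto (fun N => F N m) atTop (nhds (f m))) : CM f := by
  intro kk m
  have ht : Tendsto (fun N => (-1:ℝ)^kk * DeltaSeq^[kk] (F N) m) atTop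
      (nhds ((-1:ℝ)^kk * DeltaSeq^[kk] f m)) := (tendsto_iter h kk m).const_mul _
  exact ge_of_tendsto' ht fun N => hF N kk m

lemma iter_inv_add (a : ℝ) (ha : 0 < a) : ∀ (kk m : ℕ),
    DeltaSeq^[kk] (fun m => ((m : ℝ) + a)⁻¹) m
      = (-1)^kk * (Nat.factorial kk : ℝ) / ∏ i ∈ Finset.range (kk+1), ((m : ℝ) + a + i) := by
  intro kk
  induction kk with
  | zero => intro m; simp
  | succ k ih =>
    intro m
    have hpos : ∀ (x : ℕ) (i : ℕ), (0:ℝ) < (x:ℝ) + a + i := by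
      intro x i; positivity
    have hP : ∀ x : ℕ, (0:ℝ) < ∏ i ∈ Finset.range (k+1), ((x:ℝ) + a + i) :=
      fun x => Finset.prod_pos fun i _ => hpos x i
    have hQ : (0:ℝ) < ∏ i ∈ Finset.range (k+2), ((m:ℝ) + a + i) :=
      Finset.prod_pos fun i _ => hpos m i
    rw [Function.iterate_succ_apply']
    have hstep : DeltaSeq (DeltaSeq^[k] fun m => ((m : ℝ) + a)⁻¹) m
        = (-1)^k * (Nat.factorial k : ℝ) / ∏ i ∈ Finset.range (k+1), (((m+1 : ℕ):ℝ) + a + i)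
          - (-1)^k * (Nat.factorial k : ℝ) / ∏ i ∈ Finset.range (k+1), ((m:ℝ) + a + i) := by
      simp only [DeltaSeq, ih]
    rw [hstep]
    have e1 : ∏ i ∈ Finset.range (k+1), (((m+1 : ℕ):ℝ) + a + i)
        = ∏ i ∈ Finset.range (k+1), ((m:ℝ) + a + (i+1)) := by
      apply Finset.prod_congr rfl; intro i _; push_cast; ring
    have e2 : ∏ i ∈ Finset.range (k+2), ((m:ℝ) + a + i)
        = (∏ i ∈ Finset.range (k+1), ((m:ℝ) + a + (i+1))) * ((m:ℝ) + a + 0) := by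
      rw [Finset.prod_range_succ']
      have hc : ∀ i ∈ Finset.range (k+1), ((m:ℝ) + a + ((i+1 : ℕ):ℝ)) = ((m:ℝ) + a + ((i:ℝ)+1)) := by
        intro i _; push_cast; ring
      rw [Finset.prod_congr rfl hc]
      norm_num
    have e3 : ∏ i ∈ Finset.range (k+2), ((m:ℝ) + a + i)
        = (∏ i ∈ Finset.range (k+1), ((m:ℝ) + a + i)) * ((m:ℝ) + a + (k+1)) := by
      rw [Finset.prod_range_succ]; push_cast; ring
    have hP1 : (0:ℝ) < ∏ i ∈ Finset.range (k+1), ((m:ℝ) + a + (i+1)) := by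
      rw [← e1]; exact hP (m+1)
    rw [e1]
    rw [div_sub_div _ _ (ne_of_gt hP1) (ne_of_gt (hP m))]
    rw [div_eq_div_iff (by positivity) (ne_of_gt hQ)]
    have hfact : (Nat.factorial (k+1) : ℝ) = (k+1) * (Nat.factorial k : ℝ) := by
      rw [Nat.factorial_succ]; push_cast; ring
    rw [hfact]
    linear_combination ((-1:ℝ)^k * (Nat.factorial k : ℝ)
        * (∏ i ∈ Finset.range (k+1), ((m:ℝ) + a + i))) * e2
      - ((-1:ℝ)^k * (Nat.factorial k : ℝ)
        * (∏ i ∈ Finset.range (k+1), ((m:ℝ) + a + ((i:ℝ)+1)))) * e3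


lemma cm_inv_add (a : ℝ) (ha : 0 < a) : CM (fun m => ((m : ℝ) + a)⁻¹) := by
  intro kk m
  rw [iter_inv_add a ha]
  have hQ : (0:ℝ) < ∏ i ∈ Finset.range (kk+1), ((m:ℝ) + a + i) :=
    Finset.prod_pos fun i _ => by positivity
  have : (-1:ℝ)^kk * ((-1)^kk * (Nat.factorial kk : ℝ) / ∏ i ∈ Finset.range (kk+1), ((m:ℝ) + a + i))
      = ((-1:ℝ)^kk)^2 * ((Nat.factorial kk : ℝ) / ∏ i ∈ Finset.range (kk+1), ((m:ℝ) + a + i)) := by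
    ring
  rw [this, ← pow_mul, mul_comm kk 2, pow_mul, neg_one_sq, one_pow, one_mul]
  positivity

lemma cm_inv_sub (D : ℝ) (hD : 0 < D) (S : ℕ → ℝ) (hS : CM S) (hlt : ∀ m, S m < D) :
    CM (fun m => (D - S m)⁻¹) := by
  have hDne : D ≠ 0 := ne_of_gt hD
  apply cm_of_tendsto (F := fun N m => ∑ t ∈ Finset.range N, D⁻¹^(t+1) * S m ^ t)
  · intro N
    exact cm_sum (Finset.range N) _ fun t _ => cm_smul (by positivity) (cm_pow hS t)
  · intro m
    have h0 : 0 ≤ S m := cm_nonneg hS m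
    set r : ℝ := S m / D with hr
    have hr0 : 0 ≤ r := div_nonneg h0 (le_of_lt hD)
    have hr1 : r < 1 := (div_lt_one hD).2 (hlt m)
    have hgeo : HasSum (fun t : ℕ => D⁻¹ * r ^ t) (D⁻¹ * (1 - r)⁻¹) :=
      (hasSum_geometric_of_lt_one hr0 hr1).mul_left _
    have heq : ∀ N, (∑ t ∈ Finset.range N, D⁻¹^(t+1) * S m ^ t)
        = ∑ t ∈ Finset.range N, D⁻¹ * r ^ t := by
      intro N
      apply Finset.sum_congr rfl
      intro t _
      rw [hr, div_pow, pow_succ, div_eq_mul_inv, ← inv_pow]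
      ring
    have hlim : Tendsto (fun N => ∑ t ∈ Finset.range N, D⁻¹ * r ^ t) atTop
        (nhds (D⁻¹ * (1 - r)⁻¹)) := hgeo.tendsto_sum_nat
    have hval : D⁻¹ * (1 - r)⁻¹ = (D - S m)⁻¹ := by
      rw [← mul_inv]
      congr 1
      rw [hr, mul_sub, mul_one, mul_div_cancel₀ _ hDne]
    rw [← hval]
    simpa only [heq] using hlim

lemma delta1_iter : ∀ (i : ℕ) (y : ℕ → ℕ → ℝ) (m n : ℕ),
    (Delta1^[i] y) m n = DeltaSeq^[i] (fun m' => y m' n) m := by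
  intro i
  induction i with
  | zero => intro y m n; rfl
  | succ i ih =>
    intro y m n
    rw [Function.iterate_succ_apply, Function.iterate_succ_apply]
    rw [ih (Delta1 y) m n]
    rfl

lemma delta2_iter : ∀ (j : ℕ) (y : ℕ → ℕ → ℝ) (m n : ℕ),
    (Delta2^[j] y) m n = DeltaSeq^[j] (fun n' => y m n') n := by
  intro j
  induction j with
  | zero => intro y m n; rfl
  | succ j ih =>
    intro y m n
    rw [Function.iterate_succ_apply, Function.iterate_succ_apply]
    rw [ih (Delta2 y) m n]
    rfl

end CMHelp

open CMHelp Finset Polynomial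

/-- Nailwal, Theorem 1.4(i), case `deg a = deg b = k`:
if `b₁ ≤ a₁ ≤ b₂ ≤ a₂ ≤ … ≤ b_k ≤ a_k`, then the net `(m,n) ↦ 1/p(m,n)` with
`p(x,y) = b(x) + a(x)y` is joint completely monotone. -/
theorem equal_degree_sufficient
    (k : ℕ) (a b : ℕ → ℝ)
    (ha0 : 0 < a 0) (hb0 : 0 < b 0)
    (hapos : ∀ i ∈ Finset.Icc 1 k, 0 < a i)
    (hbpos : ∀ j ∈ Finset.Icc 1 k, 0 < b j)
    (hadist : ∀ i ∈ Finset.Icc 1 k, ∀ j ∈ Finset.Icc 1 k, i ≠ j → a i ≠ a j)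
    (hbdist : ∀ i ∈ Finset.Icc 1 k, ∀ j ∈ Finset.Icc 1 k, i ≠ j → b i ≠ b j)
    (habdist : ∀ i ∈ Finset.Icc 1 k, ∀ j ∈ Finset.Icc 1 k, a i ≠ b j)
    (hinter1 : ∀ i ∈ Finset.Icc 1 k, b i ≤ a i)
    (hinter2 : ∀ i ∈ Finset.Icc 1 (k - 1), a i ≤ b (i + 1)) :
    JointCM (fun m n : ℕ =>
      1 / ((b 0 * ∏ j ∈ Finset.Icc 1 k, ((m : ℝ) + b j)) +
            (a 0 * ∏ j ∈ Finset.Icc 1 k, ((m : ℝ) + a j)) * n)) := by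
  classical
  -- monotone chains
  have amono : ∀ i, 1 ≤ i → ∀ j, i ≤ j → j ≤ k → a i ≤ a j := by
    intro i hi j
    induction j with
    | zero => intro h1 h2; exact absurd h1 (by omega)
    | succ j ihj =>
      intro hij hjk
      rcases Nat.eq_or_lt_of_le hij with h | h
      · rw [h]
      · have hij' : i ≤ j := by omega
        have h1 : a i ≤ a j := ihj hij' (by omega)
        have h2 : a j ≤ b (j+1) := hinter2 j (Finset.mem_Icc.2 ⟨by omega, by omega⟩)
        have h3 : b (j+1) ≤ a (j+1) := hinter1 (j+1) (Finset.mem_Icc.2 ⟨by omega, by omega⟩)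
        linarith
  have bmono : ∀ i, 1 ≤ i → ∀ j, i ≤ j → j ≤ k → b i ≤ b j := by
    intro i hi j
    induction j with
    | zero => intro h1 h2; exact absurd h1 (by omega)
    | succ j ihj =>
      intro hij hjk
      rcases Nat.eq_or_lt_of_le hij with h | h
      · rw [h]
      · have hij' : i ≤ j := by omega
        have h1 : b i ≤ b j := ihj hij' (by omega)
        have h2 : b j ≤ a j := hinter1 j (Finset.mem_Icc.2 ⟨by omega, by omega⟩)
        have h3 : a j ≤ b (j+1) := hinter2 j (Finset.mem_Icc.2 ⟨by omega, by omega⟩)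
        linarith
  have hba : ∀ i j, 1 ≤ i → i ≤ j → j ≤ k → b i < a j := by
    intro i j hi hij hjk
    have h1 : b i ≤ a i := hinter1 i (Finset.mem_Icc.2 ⟨hi, by omega⟩)
    have h2 : a i ≤ a j := amono i hi j hij hjk
    have h3 : a j ≠ b i := habdist j (Finset.mem_Icc.2 ⟨by omega, hjk⟩) i (Finset.mem_Icc.2 ⟨hi, by omega⟩)
    rcases lt_or_eq_of_le (le_trans h1 h2) with h | h
    · exact h
    · exact absurd h.symm h3
  have hab : ∀ i j, 1 ≤ j → j < i → i ≤ k → a j < b i := by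
    intro i j hj hji hik
    have h1 : a j ≤ b (j+1) := hinter2 j (Finset.mem_Icc.2 ⟨hj, by omega⟩)
    have h2 : b (j+1) ≤ b i := bmono (j+1) (by omega) i (by omega) hik
    have h3 : a j ≠ b i := habdist j (Finset.mem_Icc.2 ⟨hj, by omega⟩) i (Finset.mem_Icc.2 ⟨by omega, hik⟩)
    rcases lt_or_eq_of_le (le_trans h1 h2) with h | h
    · exact h
    · exact absurd h h3
  have haa : ∀ i j, 1 ≤ i → i < j → j ≤ k → a i < a j := by
    intro i j hi hij hjk
    have h1 : a i ≤ a j := amono i hi j (by omega) hjk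
    have h3 : a i ≠ a j := hadist i (Finset.mem_Icc.2 ⟨hi, by omega⟩) j (Finset.mem_Icc.2 ⟨by omega, hjk⟩) (by omega)
    exact lt_of_le_of_ne h1 h3
  -- the residue coefficients
  set sc : ℕ → ℝ := fun j =>
    -(b 0 * ∏ i ∈ Finset.Icc 1 k, (b i - a j)) /
      (a 0 * ∏ i ∈ (Finset.Icc 1 k).erase j, (a i - a j)) with hscdef
  have hIoc : Finset.Icc 1 k = Finset.Ioc 0 k := by
    ext x; simp [Finset.mem_Icc, Finset.mem_Ioc]; omega
  -- positivity of residues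
  have hs : ∀ j ∈ Finset.Icc 1 k, 0 < sc j := by
    intro j hj
    have hj' := Finset.mem_Icc.1 hj
    obtain ⟨t, rfl⟩ : ∃ t, j = t + 1 := ⟨j - 1, by omega⟩
    set PNpos : ℝ := (∏ i ∈ Finset.Ioc 0 (t+1), (a (t+1) - b i)) *
        ∏ i ∈ Finset.Ioc (t+1) k, (b i - a (t+1)) with hPNposdef
    set PMpos : ℝ := (∏ i ∈ Finset.Ioc 0 t, (a (t+1) - a i)) *
        ∏ i ∈ Finset.Ioc (t+1) k, (a i - a (t+1)) with hPMposdef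
    have hPNpos : 0 < PNpos := by
      apply mul_pos
      · apply Finset.prod_pos
        intro i hi
        have hi' := Finset.mem_Ioc.1 hi
        exact sub_pos.2 (hba i (t+1) hi'.1 hi'.2 hj'.2)
      · apply Finset.prod_pos
        intro i hi
        have hi' := Finset.mem_Ioc.1 hi
        exact sub_pos.2 (hab i (t+1) (by omega) hi'.1 hi'.2)
    have hPMpos : 0 < PMpos := by
      apply mul_pos
      · apply Finset.prod_pos
        intro i hi
        have hi' := Finset.mem_Ioc.1 hi
        exact sub_pos.2 (haa i (t+1) hi'.1 (by omega) hj'.2)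
      · apply Finset.prod_pos
        intro i hi
        have hi' := Finset.mem_Ioc.1 hi
        exact sub_pos.2 (haa (t+1) i (by omega) hi'.1 hi'.2)
    have hPN : ∏ i ∈ Finset.Icc 1 k, (b i - a (t+1)) = (-1)^(t+1) * PNpos := by
      rw [hIoc, ← Finset.prod_Ioc_consecutive _ (Nat.zero_le (t+1)) hj'.2]
      have h1 : ∏ i ∈ Finset.Ioc 0 (t+1), (b i - a (t+1))
          = (-1)^(t+1) * ∏ i ∈ Finset.Ioc 0 (t+1), (a (t+1) - b i) := by
        have : ∀ i ∈ Finset.Ioc 0 (t+1), (b i - a (t+1)) = (-1) * (a (t+1) - b i) := by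
          intro i _; ring
        rw [Finset.prod_congr rfl this, Finset.prod_mul_distrib, Finset.prod_const, Nat.card_Ioc]
        norm_num
      rw [h1, hPNposdef]; ring
    have hPM : ∏ i ∈ (Finset.Icc 1 k).erase (t+1), (a i - a (t+1)) = (-1)^t * PMpos := by
      have hsplit : (Finset.Icc 1 k).erase (t+1) = Finset.Ioc 0 t ∪ Finset.Ioc (t+1) k := by
        ext x
        simp [Finset.mem_erase, Finset.mem_Icc, Finset.mem_Ioc, Finset.mem_union]
        omega
      have hdisj : Disjoint (Finset.Ioc 0 t) (Finset.Ioc (t+1) k) := by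
        rw [Finset.disjoint_left]
        intro x hx1 hx2
        simp [Finset.mem_Ioc] at hx1 hx2
        omega
      rw [hsplit, Finset.prod_union hdisj]
      have h1 : ∏ i ∈ Finset.Ioc 0 t, (a i - a (t+1))
          = (-1)^t * ∏ i ∈ Finset.Ioc 0 t, (a (t+1) - a i) := by
        have : ∀ i ∈ Finset.Ioc 0 t, (a i - a (t+1)) = (-1) * (a (t+1) - a i) := by
          intro i _; ring
        rw [Finset.prod_congr rfl this, Finset.prod_mul_distrib, Finset.prod_const, Nat.card_Ioc]
        norm_num
      rw [h1, hPMposdef]; ring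
    rw [hscdef]
    simp only []
    rw [hPN, hPM]
    have e1 : -(b 0 * ((-1:ℝ)^(t+1) * PNpos)) = (-1)^t * (b 0 * PNpos) := by
      rw [pow_succ]; ring
    have e2 : a 0 * ((-1:ℝ)^t * PMpos) = (-1)^t * (a 0 * PMpos) := by ring
    rw [e1, e2, mul_div_mul_left _ _ (pow_ne_zero t (by norm_num : (-1:ℝ) ≠ 0))]
    exact div_pos (mul_pos hb0 hPNpos) (mul_pos ha0 hPMpos)
  -- the partial fraction identity (polynomial form)
  have hpoly : ∀ x : ℝ, b 0 * ∏ i ∈ Finset.Icc 1 k, (x + b i)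
      = b 0 * ∏ i ∈ Finset.Icc 1 k, (x + a i)
        - ∑ j ∈ Finset.Icc 1 k, (sc j * a 0) * ∏ i ∈ (Finset.Icc 1 k).erase j, (x + a i) := by
    rcases Nat.eq_zero_or_pos k with hk0 | hk1
    · subst hk0
      intro x
      simp [Finset.Icc_eq_empty_of_lt (by norm_num : (1:ℕ) > 0)]
    intro x
    set Q : Polynomial ℝ :=
      Polynomial.C (b 0) * ∏ i ∈ Finset.Icc 1 k, (Polynomial.X + Polynomial.C (b i))
      - Polynomial.C (b 0) * ∏ i ∈ Finset.Icc 1 k, (Polynomial.X + Polynomial.C (a i))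
      + ∑ j ∈ Finset.Icc 1 k,
          Polynomial.C (sc j * a 0) * ∏ i ∈ (Finset.Icc 1 k).erase j, (Polynomial.X + Polynomial.C (a i))
      with hQdef
    have hQ0 : Q = 0 := by
      by_cases hQz : Q = 0
      · exact hQz
      have heval : ∀ j ∈ Finset.Icc 1 k, Polynomial.eval (-(a j)) Q = 0 := by
        intro j hj
        have hPMne : (∏ i ∈ (Finset.Icc 1 k).erase j, (a i - a j)) ≠ 0 := by
          apply Finset.prod_ne_zero_iff.2
          intro i hi
          have hi' := Finset.mem_erase.1 hi
          exact sub_ne_zero.2 (hadist i hi'.2 j hj hi'.1)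
        have h2 : ∏ i ∈ Finset.Icc 1 k, (-(a j) + a i) = 0 :=
          Finset.prod_eq_zero hj (by ring)
        have h3 : ∑ j' ∈ Finset.Icc 1 k,
            (sc j' * a 0) * ∏ i ∈ (Finset.Icc 1 k).erase j', (-(a j) + a i)
            = (sc j * a 0) * ∏ i ∈ (Finset.Icc 1 k).erase j, (-(a j) + a i) := by
          apply Finset.sum_eq_single_of_mem j hj
          intro j' hj' hne
          have : ∏ i ∈ (Finset.Icc 1 k).erase j', (-(a j) + a i) = 0 :=
            Finset.prod_eq_zero (Finset.mem_erase.2 ⟨fun h => hne h.symm, hj⟩) (by ring)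
          rw [this, mul_zero]
        have h4 : (sc j * a 0) * ∏ i ∈ (Finset.Icc 1 k).erase j, (-(a j) + a i)
            = -(b 0 * ∏ i ∈ Finset.Icc 1 k, (-(a j) + b i)) := by
          have e1 : ∏ i ∈ (Finset.Icc 1 k).erase j, (-(a j) + a i)
              = ∏ i ∈ (Finset.Icc 1 k).erase j, (a i - a j) :=
            Finset.prod_congr rfl (fun i _ => by ring)
          have e2 : ∏ i ∈ Finset.Icc 1 k, (-(a j) + b i)
              = ∏ i ∈ Finset.Icc 1 k, (b i - a j) :=
            Finset.prod_congr rfl (fun i _ => by ring)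
          rw [e1, e2, hscdef]
          simp only []
          field_simp
        simp only [hQdef, Polynomial.eval_add, Polynomial.eval_sub, Polynomial.eval_mul,
          Polynomial.eval_prod, Polynomial.eval_finset_sum, Polynomial.eval_C, Polynomial.eval_X]
        rw [h2, h3, h4]
        ring
      have hcard : Q.natDegree < #(Finset.Icc 1 k |>.image (fun j => -(a j))) := by
        have hinj : Set.InjOn (fun j => -(a j)) (Finset.Icc 1 k) := by
          intro i hi j hj hij
          by_contra hne
          exact hadist i (by simpa using hi) j (by simpa using hj) hne (by linarith [neg_injective hij])
        rw [Finset.card_image_of_injOn hinj, Nat.card_Icc]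
        have hdeg : Q.degree < (k : WithBot ℕ) := by
          have hmb : (∏ i ∈ Finset.Icc 1 k, (Polynomial.X + Polynomial.C (b i))).Monic :=
            Polynomial.monic_prod_of_monic _ _ (fun i _ => Polynomial.monic_X_add_C _)
          have hma : (∏ i ∈ Finset.Icc 1 k, (Polynomial.X + Polynomial.C (a i))).Monic :=
            Polynomial.monic_prod_of_monic _ _ (fun i _ => Polynomial.monic_X_add_C _)
          have hdb : (∏ i ∈ Finset.Icc 1 k, (Polynomial.X + Polynomial.C (b i))).natDegree = k := by
            rw [Polynomial.natDegree_prod _ _ (fun i _ => Polynomial.X_add_C_ne_zero (b i))]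
            simp [Polynomial.natDegree_X_add_C, Nat.card_Icc]
          have hda : (∏ i ∈ Finset.Icc 1 k, (Polynomial.X + Polynomial.C (a i))).natDegree = k := by
            rw [Polynomial.natDegree_prod _ _ (fun i _ => Polynomial.X_add_C_ne_zero (a i))]
            simp [Polynomial.natDegree_X_add_C, Nat.card_Icc]
          have hb0ne : (b 0) ≠ 0 := ne_of_gt hb0
          have hd1 : (Polynomial.C (b 0) * ∏ i ∈ Finset.Icc 1 k, (Polynomial.X + Polynomial.C (b i))).degree = (k : WithBot ℕ) := by
            rw [Polynomial.degree_mul, Polynomial.degree_C hb0ne,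
              Polynomial.degree_eq_natDegree hmb.ne_zero, hdb, zero_add]
          have hd2 : (Polynomial.C (b 0) * ∏ i ∈ Finset.Icc 1 k, (Polynomial.X + Polynomial.C (a i))).degree = (k : WithBot ℕ) := by
            rw [Polynomial.degree_mul, Polynomial.degree_C hb0ne,
              Polynomial.degree_eq_natDegree hma.ne_zero, hda, zero_add]
          have hlc : (Polynomial.C (b 0) * ∏ i ∈ Finset.Icc 1 k, (Polynomial.X + Polynomial.C (b i))).leadingCoeff
              = (Polynomial.C (b 0) * ∏ i ∈ Finset.Icc 1 k, (Polynomial.X + Polynomial.C (a i))).leadingCoeff := by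
            rw [Polynomial.leadingCoeff_mul, Polynomial.leadingCoeff_mul, hmb.leadingCoeff, hma.leadingCoeff]
          have hne1 : (Polynomial.C (b 0) * ∏ i ∈ Finset.Icc 1 k, (Polynomial.X + Polynomial.C (b i))) ≠ 0 :=
            mul_ne_zero (Polynomial.C_ne_zero.2 hb0ne) hmb.ne_zero
          have hsub : (Polynomial.C (b 0) * ∏ i ∈ Finset.Icc 1 k, (Polynomial.X + Polynomial.C (b i))
              - Polynomial.C (b 0) * ∏ i ∈ Finset.Icc 1 k, (Polynomial.X + Polynomial.C (a i))).degree
              < (k : WithBot ℕ) := by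
            have := Polynomial.degree_sub_lt (hd1.trans hd2.symm) hne1 hlc
            rwa [hd1] at this
          have hsum : (∑ j ∈ Finset.Icc 1 k,
              Polynomial.C (sc j * a 0) * ∏ i ∈ (Finset.Icc 1 k).erase j, (Polynomial.X + Polynomial.C (a i))).degree
              < (k : WithBot ℕ) := by
            apply lt_of_le_of_lt (Polynomial.degree_sum_le _ _)
            apply Finset.sup_lt_iff (by exact WithBot.bot_lt_coe k) |>.2
            intro j hj
            apply lt_of_le_of_lt (Polynomial.degree_mul_le _ _)
            have hmaj : (∏ i ∈ (Finset.Icc 1 k).erase j, (Polynomial.X + Polynomial.C (a i))).Monic :=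
              Polynomial.monic_prod_of_monic _ _ (fun i _ => Polynomial.monic_X_add_C _)
            have hdaj : (∏ i ∈ (Finset.Icc 1 k).erase j, (Polynomial.X + Polynomial.C (a i))).natDegree = k - 1 := by
              rw [Polynomial.natDegree_prod _ _ (fun i _ => Polynomial.X_add_C_ne_zero (a i))]
              simp [Polynomial.natDegree_X_add_C, Finset.card_erase_of_mem hj, Nat.card_Icc]
            have hdegaj : (∏ i ∈ (Finset.Icc 1 k).erase j, (Polynomial.X + Polynomial.C (a i))).degree
                = ((k - 1 : ℕ) : WithBot ℕ) := by
              rw [Polynomial.degree_eq_natDegree hmaj.ne_zero, hdaj]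
            calc (Polynomial.C (sc j * a 0)).degree
                  + (∏ i ∈ (Finset.Icc 1 k).erase j, (Polynomial.X + Polynomial.C (a i))).degree
                ≤ 0 + ((k - 1 : ℕ) : WithBot ℕ) := by
                  exact add_le_add Polynomial.degree_C_le (le_of_eq hdegaj)
              _ = ((k - 1 : ℕ) : WithBot ℕ) := zero_add _
              _ < (k : WithBot ℕ) := by
                  exact_mod_cast (show k - 1 < k by omega)
          have hQle : Q.degree ≤ max
              ((Polynomial.C (b 0) * ∏ i ∈ Finset.Icc 1 k, (Polynomial.X + Polynomial.C (b i))
                - Polynomial.C (b 0) * ∏ i ∈ Finset.Icc 1 k, (Polynomial.X + Polynomial.C (a i))).degree)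
              ((∑ j ∈ Finset.Icc 1 k,
                Polynomial.C (sc j * a 0) * ∏ i ∈ (Finset.Icc 1 k).erase j, (Polynomial.X + Polynomial.C (a i))).degree) := by
            rw [hQdef]
            exact Polynomial.degree_add_le _ _
          exact lt_of_le_of_lt hQle (max_lt hsub hsum)
        have := (Polynomial.natDegree_lt_iff_degree_lt hQz).2 hdeg
        omega
      exact Polynomial.eq_zero_of_natDegree_lt_card_of_eval_eq_zero' Q _
        (fun x hx => by
          obtain ⟨j, hj, rfl⟩ := Finset.mem_image.1 hx
          exact heval j hj) hcard
    have := congrArg (Polynomial.eval x) hQ0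
    simp only [hQdef, Polynomial.eval_add, Polynomial.eval_sub, Polynomial.eval_mul,
      Polynomial.eval_prod, Polynomial.eval_finset_sum, Polynomial.eval_C, Polynomial.eval_X,
      Polynomial.eval_zero] at this
    linarith [this]
  -- positivity of the polynomials
  have hA : ∀ m : ℕ, 0 < a 0 * ∏ i ∈ Finset.Icc 1 k, ((m:ℝ) + a i) := by
    intro m
    apply mul_pos ha0
    apply Finset.prod_pos
    intro i hi
    have := hapos i hi
    positivity
  have hB : ∀ m : ℕ, 0 < b 0 * ∏ i ∈ Finset.Icc 1 k, ((m:ℝ) + b i) := by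
    intro m
    apply mul_pos hb0
    apply Finset.prod_pos
    intro i hi
    have := hbpos i hi
    positivity
  -- the partial fraction identity, rational form
  have hkey : ∀ m : ℕ,
      (b 0 * ∏ i ∈ Finset.Icc 1 k, ((m:ℝ) + b i)) / (a 0 * ∏ i ∈ Finset.Icc 1 k, ((m:ℝ) + a i))
      = b 0 / a 0 - ∑ j ∈ Finset.Icc 1 k, sc j * ((m:ℝ) + a j)⁻¹ := by
    intro m
    have hAne : (a 0 * ∏ i ∈ Finset.Icc 1 k, ((m:ℝ) + a i)) ≠ 0 := ne_of_gt (hA m)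
    have hterm : ∀ j ∈ Finset.Icc 1 k,
        (sc j * a 0) * ∏ i ∈ (Finset.Icc 1 k).erase j, ((m:ℝ) + a i)
        = (sc j * ((m:ℝ) + a j)⁻¹) * (a 0 * ∏ i ∈ Finset.Icc 1 k, ((m:ℝ) + a i)) := by
      intro j hj
      have hprod : ∏ i ∈ Finset.Icc 1 k, ((m:ℝ) + a i)
          = ((m:ℝ) + a j) * ∏ i ∈ (Finset.Icc 1 k).erase j, ((m:ℝ) + a i) :=
        (Finset.mul_prod_erase _ _ hj).symm
      have hja : ((m:ℝ) + a j) ≠ 0 := by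
        have := hapos j hj; positivity
      rw [hprod]
      field_simp
    have hsum : ∑ j ∈ Finset.Icc 1 k, (sc j * a 0) * ∏ i ∈ (Finset.Icc 1 k).erase j, ((m:ℝ) + a i)
        = (∑ j ∈ Finset.Icc 1 k, sc j * ((m:ℝ) + a j)⁻¹)
          * (a 0 * ∏ i ∈ Finset.Icc 1 k, ((m:ℝ) + a i)) := by
      rw [Finset.sum_mul]
      exact Finset.sum_congr rfl hterm
    have hb' : b 0 * ∏ i ∈ Finset.Icc 1 k, ((m:ℝ) + a i)
        = (b 0 / a 0) * (a 0 * ∏ i ∈ Finset.Icc 1 k, ((m:ℝ) + a i)) := by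
      field_simp
    rw [hpoly ((m:ℝ)), hsum, hb', ← sub_mul, mul_div_cancel_right₀ _ hAne]
  -- CM of the partial fraction sum
  have hScm : CM (fun m' : ℕ => ∑ j ∈ Finset.Icc 1 k, sc j * ((m':ℝ) + a j)⁻¹) :=
    cm_sum _ _ (fun j hj => cm_smul (le_of_lt (hs j hj)) (cm_inv_add (a j) (hapos j hj)))
  -- main assembly
  intro ii jj m n
  set xf : ℕ → ℕ → ℝ := fun m n =>
    1 / (b 0 * ∏ j ∈ Finset.Icc 1 k, ((m:ℝ) + b j)
      + (a 0 * ∏ j ∈ Finset.Icc 1 k, ((m:ℝ) + a j)) * (n:ℝ)) with hxf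
  have hg : CM (fun m' : ℕ => (-1:ℝ)^jj * (Delta2^[jj] xf) m' n) := by
    have hEq : (fun m' : ℕ => (-1:ℝ)^jj * (Delta2^[jj] xf) m' n)
        = fun m' : ℕ => (Nat.factorial jj : ℝ) *
            (((a 0)⁻¹ * ∏ i ∈ Finset.Icc 1 k, ((m':ℝ) + a i)⁻¹) *
             ∏ q ∈ Finset.range (jj+1),
               ((b 0 / a 0 + (n:ℝ) + (q:ℝ))
                 - ∑ j ∈ Finset.Icc 1 k, sc j * ((m':ℝ) + a j)⁻¹)⁻¹) := by
      funext m'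
      rw [delta2_iter]
      have hAm := hA m'
      have hBm := hB m'
      have hC : 0 < (b 0 * ∏ i ∈ Finset.Icc 1 k, ((m':ℝ) + b i))
          / (a 0 * ∏ i ∈ Finset.Icc 1 k, ((m':ℝ) + a i)) := div_pos hBm hAm
      have hxm : (fun n' : ℕ => xf m' n')
          = fun n' : ℕ => (a 0 * ∏ i ∈ Finset.Icc 1 k, ((m':ℝ) + a i))⁻¹ *
              ((n':ℝ) + (b 0 * ∏ i ∈ Finset.Icc 1 k, ((m':ℝ) + b i)) /
                (a 0 * ∏ i ∈ Finset.Icc 1 k, ((m':ℝ) + a i)))⁻¹ := by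
        funext n'
        show 1 / (b 0 * ∏ i ∈ Finset.Icc 1 k, ((m':ℝ) + b i)
            + (a 0 * ∏ i ∈ Finset.Icc 1 k, ((m':ℝ) + a i)) * (n':ℝ)) = _
        rw [← mul_inv, one_div]
        congr 1
        field_simp
        have hP : (∏ i ∈ Finset.Icc 1 k, ((m':ℝ) + a i)) ≠ 0 :=
          Finset.prod_ne_zero_iff.2 fun i hi => by have := hapos i hi; positivity
        have e : (∏ i ∈ Finset.Icc 1 k, ((m':ℝ) + a i)) *
            ((b 0 * ∏ i ∈ Finset.Icc 1 k, ((m':ℝ) + b i)) / ∏ i ∈ Finset.Icc 1 k, ((m':ℝ) + a i))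
            = b 0 * ∏ i ∈ Finset.Icc 1 k, ((m':ℝ) + b i) := by
          field_simp
        rw [mul_add, e]
        ring
      rw [hxm, iter_smul, iter_inv_add _ hC]
      have hq : ∀ q ∈ Finset.range (jj+1),
          ((n:ℝ) + (b 0 * ∏ i ∈ Finset.Icc 1 k, ((m':ℝ) + b i)) /
              (a 0 * ∏ i ∈ Finset.Icc 1 k, ((m':ℝ) + a i)) + (q:ℝ))
          = ((b 0 / a 0 + (n:ℝ) + (q:ℝ))
              - ∑ j ∈ Finset.Icc 1 k, sc j * ((m':ℝ) + a j)⁻¹) := by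
        intro q _
        rw [hkey m']
        ring
      rw [Finset.prod_congr rfl hq]
      have h11 : ((-1:ℝ)^jj) * ((-1:ℝ)^jj) = 1 := by
        rw [← pow_add]
        exact Even.neg_one_pow ⟨jj, rfl⟩
      have hshape : (-1:ℝ)^jj * ((a 0 * ∏ i ∈ Finset.Icc 1 k, ((m':ℝ) + a i))⁻¹ *
            ((-1:ℝ)^jj * (Nat.factorial jj : ℝ) / ∏ q ∈ Finset.range (jj+1),
              ((b 0 / a 0 + (n:ℝ) + (q:ℝ))
                - ∑ j ∈ Finset.Icc 1 k, sc j * ((m':ℝ) + a j)⁻¹)))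
          = (((-1:ℝ)^jj) * ((-1:ℝ)^jj)) * ((a 0 * ∏ i ∈ Finset.Icc 1 k, ((m':ℝ) + a i))⁻¹ *
            ((Nat.factorial jj : ℝ) / ∏ q ∈ Finset.range (jj+1),
              ((b 0 / a 0 + (n:ℝ) + (q:ℝ))
                - ∑ j ∈ Finset.Icc 1 k, sc j * ((m':ℝ) + a j)⁻¹))) := by
        ring
      rw [hshape, h11, one_mul, mul_inv, div_eq_mul_inv, ← Finset.prod_inv_distrib,
        ← Finset.prod_inv_distrib]
      ring
    rw [hEq]
    apply cm_smul (Nat.cast_nonneg _)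
    apply cm_mul
    · exact cm_smul (inv_nonneg.2 (le_of_lt ha0))
        (cm_prod _ _ fun i hi => cm_inv_add (a i) (hapos i hi))
    · apply cm_prod
      intro q _
      have hD : (0:ℝ) < b 0 / a 0 + (n:ℝ) + (q:ℝ) := by
        have h1 : (0:ℝ) < b 0 / a 0 := div_pos hb0 ha0
        have h2 : (0:ℝ) ≤ (n:ℝ) := Nat.cast_nonneg n
        have h3 : (0:ℝ) ≤ (q:ℝ) := Nat.cast_nonneg q
        linarith
      apply cm_inv_sub _ hD _ hScm
      intro m'
      have hpos := div_pos (hB m') (hA m')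
      rw [hkey m'] at hpos
      have h2 : (0:ℝ) ≤ (n:ℝ) := Nat.cast_nonneg n
      have h3 : (0:ℝ) ≤ (q:ℝ) := Nat.cast_nonneg q
      linarith
  have h1 : (Delta1^[ii] (Delta2^[jj] xf)) m n
      = DeltaSeq^[ii] (fun m' => (Delta2^[jj] xf) m' n) m := delta1_iter ii _ m n
  have h3 := hg ii m
  rw [iter_smul] at h3
  rw [h1]
  calc (0:ℝ) ≤ (-1:ℝ)^ii * ((-1:ℝ)^jj * DeltaSeq^[ii] (fun m' => (Delta2^[jj] xf) m' n) m) := h3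
    _ = (-1:ℝ)^(ii+jj) * DeltaSeq^[ii] (fun m' => (Delta2^[jj] xf) m' n) m := by
        rw [pow_add]; ring
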